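/- Fix an integer N > 2, set κ_N = (−1)^{1+N/2} if N is even and fix κ_N ∈ {−1,+1} if N is odd. Let θ_1,…,θ_N be the N distinct N-th roots of κ_N, J = {ℓ : Re θ_ℓ > 0}, K = {ℓ : Re θ_ℓ < 0}, and A_j = ∏_{ℓ∈J∖{j}} θ_ℓ/(θ_ℓ − θ_j) for j ∈ J. Then Σ_{j∈J} A_j θ_j^{−#K} = 1, where #K is the cardinality of K. -/

import Mathlib

/-!
For nodes `J` and `f` of degree `< #J`, Lagrange interpolation at `0` gives
`Σ_{j ∈ J} A_j f(θ_j) = f(0)`. Taking `f = X^{#J} - ∏_{ℓ ∈ J} (X - θ_ℓ)` yields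
`Σ_j A_j θ_j^{#J} = -∏_{j ∈ J} (-θ_j)`, and `θ_j^{-#K} = θ_j^{#J} / κ` once `#J + #K = N`.
The roots of `X^N - κ` satisfy `∏ (-θ) = -κ`, while those in `K` pair off with their
conjugates (`θ θ̄ = 1`, the only self-conjugate one being `-1`), so `∏_{K} (-θ) = 1` and
`∏_{J} (-θ) = -κ`. The choice of `κ_N` keeps every root off the imaginary axis, and `J ≠ ∅`
because the roots sum to zero.
-/

open Finset Complex Polynomial ComplexConjugate

section Lagrange

variable {F : Type*} [Field F] [DecidableEq F]

theorem sum_eval_mul_prod_div_sub_eq_eval_zero (s : Finset F) {f : F[X]} (hf : f.degree < #s) :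
    ∑ z ∈ s, f.eval z * ∏ w ∈ s.erase z, w / (w - z) = f.eval 0 := by
  conv_rhs => rw [Lagrange.eq_interpolate (Set.injOn_id _) hf]
  rw [Lagrange.interpolate_apply, eval_finsetSum]
  refine sum_congr rfl fun z _ => ?_
  rw [eval_mul, eval_C, Lagrange.basis, eval_prod]
  congr 1
  refine prod_congr rfl fun w hw => ?_
  have hzw : z - w ≠ 0 := sub_ne_zero.mpr (ne_of_mem_erase hw).symm
  simp only [Lagrange.basisDivisor, eval_mul, eval_C, eval_sub, eval_X, id]
  rw [← neg_sub w z]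
  field_simp
  ring

theorem sum_prod_div_sub_mul_pow_card_eq_neg_prod_neg {s : Finset F} (hs : s.Nonempty) :
    ∑ z ∈ s, (∏ w ∈ s.erase z, w / (w - z)) * z ^ #s = -∏ z ∈ s, -z := by
  set q : F[X] := X ^ #s - Lagrange.nodal s id
  have hq_deg : q.degree < #s := by
    have hdeg : ((X : F[X]) ^ #s).degree = (Lagrange.nodal s id).degree := by
      rw [degree_X_pow, Lagrange.degree_nodal]
    simpa only [degree_X_pow] using degree_sub_lt_left hdeg (pow_ne_zero _ X_ne_zero)
      (by rw [leadingCoeff_X_pow, Lagrange.nodal_monic.leadingCoeff])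
  have hq_node : ∀ z ∈ s, q.eval z = z ^ #s := fun z hz => by
    simpa [q] using Lagrange.eval_nodal_at_node (v := id) hz
  have hq_zero : q.eval 0 = -∏ z ∈ s, -z := by
    simp [q, Lagrange.eval_nodal, zero_pow (card_ne_zero.mpr hs)]
  rw [← hq_zero, ← sum_eval_mul_prod_div_sub_eq_eval_zero s hq_deg]
  exact sum_congr rfl fun z hz => by rw [hq_node z hz, mul_comm]

end Lagrange

section RootsOfXPowSubC

variable {F : Type*} [Field F] {N : ℕ} {κ : F} {T : Finset F}

theorem roots_X_pow_sub_C_eq_val (hN : 0 < N) (hT : ∀ z ∈ T, z ^ N = κ) (hcard : #T = N) :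
    (X ^ N - C κ).roots = T.val :=
  roots_eq_of_natDegree_le_card_of_ne_zero (fun z hz => by simp [hT z hz])
    (by rw [natDegree_X_pow_sub_C, hcard]) (X_pow_sub_C_ne_zero hN κ)

theorem mem_of_pow_eq_of_card_eq (hN : 0 < N) (hT : ∀ z ∈ T, z ^ N = κ) (hcard : #T = N)
    {z : F} (hz : z ^ N = κ) : z ∈ T := by
  rw [Finset.mem_def, ← roots_X_pow_sub_C_eq_val hN hT hcard,
    mem_roots (X_pow_sub_C_ne_zero hN κ)]
  simp [hz]

theorem splits_X_pow_sub_C_of_card_eq (hN : 0 < N) (hT : ∀ z ∈ T, z ^ N = κ) (hcard : #T = N) :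
    (X ^ N - C κ).Splits := by
  rw [splits_iff_card_roots, roots_X_pow_sub_C_eq_val hN hT hcard, natDegree_X_pow_sub_C]
  exact hcard

theorem prod_neg_eq_neg_of_card_eq (hN : 0 < N) (hT : ∀ z ∈ T, z ^ N = κ) (hcard : #T = N) :
    ∏ z ∈ T, -z = -κ := by
  have := (splits_X_pow_sub_C_of_card_eq hN hT hcard).eval_eq_prod_roots_of_monic
    (monic_X_pow_sub_C κ hN.ne') 0
  rw [roots_X_pow_sub_C_eq_val hN hT hcard, prod_map_val] at this
  simpa [zero_pow hN.ne'] using this.symm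

theorem sum_eq_zero_of_card_eq (hN : 2 ≤ N) (hT : ∀ z ∈ T, z ^ N = κ) (hcard : #T = N) :
    ∑ z ∈ T, z = 0 := by
  have hN0 : 0 < N := by omega
  have := (splits_X_pow_sub_C_of_card_eq hN0 hT hcard).nextCoeff_eq_neg_sum_roots_of_monic
    (monic_X_pow_sub_C κ hN0.ne')
  rw [roots_X_pow_sub_C_eq_val hN0 hT hcard, sum_val, nextCoeff_of_natDegree_pos
    (by rw [natDegree_X_pow_sub_C]; exact hN0), natDegree_X_pow_sub_C] at this
  simpa [coeff_X_pow, coeff_C, show N - 1 ≠ N by omega, show N - 1 ≠ 0 by omega] using this.symm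

end RootsOfXPowSubC

theorem Complex.pow_two_mul_of_re_eq_zero {z : ℂ} (hz : z.re = 0) (m : ℕ) :
    z ^ (2 * m) = (-1) ^ m * ((z.im ^ (2 * m) : ℝ) : ℂ) := by
  have hsq : z ^ 2 = -((z.im ^ 2 : ℝ) : ℂ) := by
    apply Complex.ext <;> simp [sq, hz]
  rw [pow_mul, hsq, neg_eq_neg_one_mul, mul_pow, ← ofReal_pow, ← pow_mul]

theorem Complex.re_ne_zero_of_pow_eq {N : ℕ} {κ z : ℂ}
    (hκeven : Even N → κ = (-1) ^ (1 + N / 2)) (hκodd : ¬ Even N → κ = 1 ∨ κ = -1)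
    (hz : z ^ N = κ) : z.re ≠ 0 := by
  intro hre
  suffices h : ∃ m, ((z.im ^ (2 * m) : ℝ) : ℂ) = -1 by
    obtain ⟨m, hm⟩ := h
    have hm' : (z.im ^ (2 * m) : ℝ) = -1 := by exact_mod_cast hm
    have : 0 ≤ z.im ^ (2 * m) := by rw [pow_mul]; positivity
    linarith
  by_cases hN : Even N
  · obtain ⟨m, rfl⟩ := hN
    refine ⟨m, mul_left_cancel₀ (pow_ne_zero m (neg_ne_zero.mpr one_ne_zero)) ?_⟩
    rw [← pow_two_mul_of_re_eq_zero hre, two_mul, hz, hκeven ⟨m, rfl⟩,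
      show (m + m) / 2 = m by omega, add_comm, pow_succ]
  · refine ⟨N, ?_⟩
    have hκsq : κ ^ 2 = 1 := by rcases hκodd hN with rfl | rfl <;> norm_num
    have h := pow_two_mul_of_re_eq_zero hre N
    rw [pow_mul', hz, hκsq, (Nat.not_even_iff_odd.mp hN).neg_one_pow] at h
    linear_combination h

theorem Complex.norm_eq_one_of_pow_eq {N : ℕ} {κ z : ℂ} (hN : N ≠ 0) (hκ : κ = 1 ∨ κ = -1)
    (hz : z ^ N = κ) : ‖z‖ = 1 :=
  norm_eq_one_of_pow_eq_one (n := 2 * N)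
    (by rw [pow_mul', hz]; rcases hκ with rfl | rfl <;> norm_num) (by omega)

theorem Complex.prod_neg_eq_one_of_re_neg (s : Finset ℂ) (hconj : ∀ z ∈ s, conj z ∈ s)
    (hnorm : ∀ z ∈ s, ‖z‖ = 1) (hre : ∀ z ∈ s, z.re < 0) : ∏ z ∈ s, -z = 1 := by
  refine prod_involution (fun z _ => conj z) (fun z hz => ?_) (fun z hz hz1 hfix => ?_) hconj
    (fun z _ => conj_conj z)
  · rw [neg_mul_neg, mul_conj, normSq_eq_norm_sq, hnorm z hz]
    norm_num
  · obtain ⟨x, rfl⟩ := conj_eq_iff_real.mp hfix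
    have hx : |x| = 1 := by simpa using hnorm _ hz
    have hx0 : x < 0 := by simpa using hre _ hz
    rw [abs_of_neg hx0] at hx
    exact hz1 (by rw [show x = -1 by linarith]; simp)

theorem Complex.exists_re_pos_of_sum_eq_zero {s : Finset ℂ} (hs : s.Nonempty)
    (hsum : ∑ z ∈ s, z = 0) (hre : ∀ z ∈ s, z.re ≠ 0) : ∃ z ∈ s, 0 < z.re := by
  by_contra! h
  have hlt : ∑ z ∈ s, z.re < ∑ z ∈ s, (0 : ℝ) :=
    sum_lt_sum_of_nonempty hs fun z hz => (h z hz).lt_of_ne (hre z hz)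
  rw [← re_sum, hsum, sum_const_zero, zero_re] at hlt
  exact hlt.false

theorem prod_neg_filter_re_neg_eq_one_of_card_eq {N : ℕ} (hN : 0 < N) {κ : ℂ}
    (hκ : κ = 1 ∨ κ = -1) {T : Finset ℂ} (hT : ∀ z ∈ T, z ^ N = κ) (hcard : #T = N) :
    ∏ z ∈ T.filter (·.re < 0), -z = 1 := by
  refine prod_neg_eq_one_of_re_neg _ (fun z hz => ?_)
    (fun z hz => norm_eq_one_of_pow_eq hN.ne' hκ (hT z (mem_filter.mp hz).1))
    (fun z hz => (mem_filter.mp hz).2)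
  obtain ⟨hzT, hzre⟩ := mem_filter.mp hz
  refine mem_filter.mpr ⟨mem_of_pow_eq_of_card_eq hN hT hcard ?_, by simpa using hzre⟩
  rw [← map_pow, hT z hzT]
  rcases hκ with rfl | rfl <;> simp

theorem sum_prod_div_sub_mul_zpow_eq_one {N : ℕ} (hN : 2 < N) {κ : ℂ}
    (hκeven : Even N → κ = (-1 : ℂ) ^ (1 + N / 2)) (hκodd : ¬ Even N → κ = 1 ∨ κ = -1)
    {T : Finset ℂ} (hT : ∀ z ∈ T, z ^ N = κ) (hcard : #T = N) :
    ∑ z ∈ T.filter (0 < ·.re), (∏ w ∈ (T.filter (0 < ·.re)).erase z, w / (w - z)) *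
      z ^ (-(#(T.filter (·.re < 0)) : ℤ)) = 1 := by
  set J := T.filter (0 < ·.re)
  set K := T.filter (·.re < 0)
  have hκ : κ = 1 ∨ κ = -1 := by
    by_cases hE : Even N
    · exact (hκeven hE).symm ▸ neg_one_pow_eq_or ℂ _
    · exact hκodd hE
  have hκ0 : κ ≠ 0 := by rcases hκ with rfl | rfl <;> norm_num
  have hre : ∀ z ∈ T, z.re ≠ 0 := fun z hz => re_ne_zero_of_pow_eq hκeven hκodd (hT z hz)
  have hK_compl : T.filter (¬ 0 < ·.re) = K :=
    filter_congr fun z hz => by simp only [not_lt, (hre z hz).le_iff_lt]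
  have hcardJK : #J + #K = N := by
    rw [← hK_compl, card_filter_add_card_filter_not, hcard]
  have hJ : J.Nonempty := by
    obtain ⟨z, hz, hzre⟩ := exists_re_pos_of_sum_eq_zero (card_pos.mp (by omega))
      (sum_eq_zero_of_card_eq hN.le hT hcard) hre
    exact ⟨z, mem_filter.mpr ⟨hz, hzre⟩⟩
  have hprodK : ∏ z ∈ K, -z = 1 :=
    prod_neg_filter_re_neg_eq_one_of_card_eq (by omega) hκ hT hcard
  have hprodJ : ∏ z ∈ J, -z = -κ := by
    rw [← mul_one (∏ z ∈ J, -z), ← hprodK, ← hK_compl, prod_filter_mul_prod_filter_not,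
      prod_neg_eq_neg_of_card_eq (by omega) hT hcard]
  have hpow : ∀ z ∈ J, z ^ (-(#K : ℤ)) = z ^ #J / κ := fun z hz => by
    have hz0 : z ≠ 0 := ne_zero_of_re_pos (mem_filter.mp hz).2
    rw [show -(#K : ℤ) = #J - N by omega, zpow_sub₀ hz0, zpow_natCast, zpow_natCast,
      hT z (mem_filter.mp hz).1]
  calc _ = (∑ z ∈ J, (∏ w ∈ J.erase z, w / (w - z)) * z ^ #J) / κ := by
        rw [sum_div]
        exact sum_congr rfl fun z hz => by rw [hpow z hz, mul_div_assoc]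
    _ = 1 := by
        rw [sum_prod_div_sub_mul_pow_card_eq_neg_prod_neg hJ, hprodJ, neg_neg, div_self hκ0]

/-- With `θ_1,…,θ_N` the `N` distinct `N`-th roots of `κ_N`,
`J = {ℓ : Re θ_ℓ > 0}`, `K = {ℓ : Re θ_ℓ < 0}` and
`A_j = ∏_{ℓ∈J∖{j}} θ_ℓ/(θ_ℓ − θ_j)`, one has `Σ_{j∈J} A_j θ_j^{−#K} = 1`. -/
theorem alpha_neg_cardK_eq_one (N : ℕ) (hN : 2 < N) (κ : ℂ)
    (hκeven : Even N → κ = (-1 : ℂ) ^ (1 + N / 2))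
    (hκodd : ¬ Even N → κ = 1 ∨ κ = -1)
    (θ : Fin N → ℂ) (hinj : Function.Injective θ) (hroot : ∀ i, θ i ^ N = κ) :
    ∑ j ∈ Finset.univ.filter (fun i => 0 < (θ i).re),
        (∏ ℓ ∈ (Finset.univ.filter (fun i => 0 < (θ i).re)).erase j,
            θ ℓ / (θ ℓ - θ j)) *
          θ j ^ (-((Finset.univ.filter (fun i => (θ i).re < 0)).card : ℤ))
      = 1 := by
  classical
  have hT : ∀ z ∈ univ.image θ, z ^ N = κ := by simpa using hroot
  have hcard : #(univ.image θ) = N := by simp [card_image_of_injective _ hinj]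
  have key := sum_prod_div_sub_mul_zpow_eq_one hN hκeven hκodd hT hcard
  rw [filter_image, filter_image, card_image_of_injective _ hinj, sum_image hinj.injOn] at key
  rw [← key]
  refine sum_congr rfl fun j _ => ?_
  rw [← image_erase hinj, prod_image hinj.injOn]
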